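/- Let F be a real quadratic field with O_F = Z + Zθ, and let C, N be coprime positive integers with every prime factor of NC split in F, N·O_F = 𝔑·𝔑̄ with (𝔑,𝔑̄)=1 and C·O_F = 𝔠·𝔠̄ with (𝔠,𝔠̄)=1. With the embedding Ψ : F → M₂(Q), Ψ(θ) = [[Tr θ, −N θ],[1,0]], and the adelic element ς^{(C)} ∈ GL₂(A_f) constructed from the matrices ς_q = δ⁻¹[[θ̄, θ],[1,1]] at split primes q (for a chosen prime 𝔮 over q) and ς_q^{(C)} = [[C,−1],[0,1]] at primes dividing C, the embedding Ψ is an optimal embedding of the order O_C = Z + C·O_F into the Eichler order R_N := M₂(Q) ∩ ς^{(C)} M₂(Ẑ) (ς^{(C)})⁻¹ of level N; that is, Ψ⁻¹(R_N) ∩ F = O_C. -/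

import Mathlib

/-!
Write `x = u + vθ`. Conjugation by `ς_q` diagonalizes `Ψ(x)` to `diag(u + vθ̄, u + vθ)`, read in
`ℚ_q` through a square root `r` of the discriminant, and the extra factor `[[C, -1], [0, 1]]` adds
the off-diagonal entry `-vr/C`. Because `O_F = ℤ[θ]`, every such `r` is a `q`-adic unit: if `q ∣ r`,
an integer approximation `s` of `r` makes `((s - t)/2 + θ)/q` integral over `ℤ` but not in
`ℤ[θ]`. Hence the conditions at `q` say exactly that `u` and `v/C` are `q`-integral, and over all
primes that `u ∈ ℤ` and `v ∈ Cℤ`.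
-/

open Matrix

noncomputable section

/-- The local matrix `ς_q` (up to the scalar `δ⁻¹`, which is irrelevant for
conjugation): `[[θ̄, θ],[1,1]]` with `θ ↦ (T-r)/2`, `θ̄ ↦ (T+r)/2` for a chosen square
root `r` of the discriminant `T² - 4N` in `ℚ_q`. -/
def splitMat {q : ℕ} [Fact q.Prime] (T : ℚ) (r : ℚ_[q]) : Matrix (Fin 2) (Fin 2) ℚ_[q] :=
  !![((T : ℚ_[q]) + r) / 2, ((T : ℚ_[q]) - r) / 2; 1, 1]

/-- The extra local matrix `ς_q^{(C)} = [[C, -1],[0,1]]` at primes dividing `C`. -/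
def cMat (q : ℕ) [Fact q.Prime] (C : ℕ) : Matrix (Fin 2) (Fin 2) ℚ_[q] :=
  !![(C : ℚ_[q]), -1; 0, 1]

/-- A `2×2` matrix over `ℚ_q` lies in `M₂(ℤ_q)`, i.e. all entries have norm `≤ 1`. -/
def isIntegralMat {q : ℕ} [Fact q.Prime] (A : Matrix (Fin 2) (Fin 2) ℚ_[q]) : Prop :=
  ∀ i j, ‖A i j‖ ≤ 1

section Ultrametric

variable {K : Type*} [NormedField K] [IsUltrametricDist K]

lemma IsUltrametricDist.norm_sub_le_max (a b : K) : ‖a - b‖ ≤ max ‖a‖ ‖b‖ := by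
  simpa [sub_eq_add_neg] using IsUltrametricDist.norm_add_le_max a (-b)

lemma norm_le_one_of_sq_eq {t n w : K} (ht : ‖t‖ ≤ 1) (hn : ‖n‖ ≤ 1) (hw : w ^ 2 = t * w - n) :
    ‖w‖ ≤ 1 := by
  by_contra! hw1
  have : ‖w‖ ^ 2 ≤ ‖w‖ := by
    calc ‖w‖ ^ 2 = ‖t * w - n‖ := by rw [← norm_pow, hw]
      _ ≤ max (‖t‖ * ‖w‖) ‖n‖ := by
        simpa only [norm_mul] using IsUltrametricDist.norm_sub_le_max (t * w) n
      _ ≤ ‖w‖ := max_le (mul_le_of_le_one_left (norm_nonneg w) ht) (hn.trans hw1.le)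
  nlinarith

lemma norm_add_mul_le_one {a b w : K} (ha : ‖a‖ ≤ 1) (hb : ‖b‖ ≤ 1) (hw : ‖w‖ ≤ 1) :
    ‖a + b * w‖ ≤ 1 :=
  (IsUltrametricDist.norm_add_le_max _ _).trans
    (max_le ha (by rw [norm_mul]; exact mul_le_one₀ hb (norm_nonneg w) hw))

end Ultrametric

section QuadMat

variable {R : Type*} [CommRing R]

/-- The image of `u + vθ` under the embedding `θ ↦ !![T, -N; 1, 0]`. -/
def quadMat (T N u v : R) : Matrix (Fin 2) (Fin 2) R :=
  !![u + v * T, -(v * N); v, u]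

lemma quadMat_map {S : Type*} [CommRing S] (f : R →+* S) (T N u v : R) :
    (quadMat T N u v).map f = quadMat (f T) (f N) (f u) (f v) := by
  ext i j
  fin_cases i <;> fin_cases j <;> simp [quadMat]

lemma eq_quadMat_of_commute {A : Matrix (Fin 2) (Fin 2) R} {T N : R}
    (h : Commute A !![T, -N; 1, 0]) : A = quadMat T N (A 1 1) (A 1 0) := by
  have h10 := congrFun (congrFun h.eq 1) 0
  have h11 := congrFun (congrFun h.eq 1) 1
  simp [Matrix.mul_apply, Fin.sum_univ_two] at h10 h11
  ext i j
  fin_cases i <;> fin_cases j <;> simp [quadMat, ← h10, ← h11, add_comm]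

end QuadMat

open Polynomial in
lemma isIntegral_of_sq_sub_mul_add_eq_zero {R : Type*} [CommRing R] {y : R} (e f : ℤ)
    (h : y ^ 2 - e * y + f = 0) : IsIntegral ℤ y :=
  ⟨X ^ 2 - C e * X + C f, by monicity!, by
    rw [eval₂_add, eval₂_sub, eval₂_mul, eval₂_C, eval₂_C, eval₂_pow, eval₂_X]
    simpa using h⟩

section QuadraticAlgebra

variable {F : Type*} [Field F] [Algebra ℚ F] {θ : F}

lemma sq_sub_eq_algebraMap_disc (σ : F ≃ₐ[ℚ] F) {T N : ℚ} (hT : θ + σ θ = algebraMap ℚ F T)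
    (hN : θ * σ θ = algebraMap ℚ F N) : (θ - σ θ) ^ 2 = algebraMap ℚ F (T ^ 2 - 4 * N) := by
  simp only [map_sub, map_pow, map_mul, map_ofNat, ← hT, ← hN]
  ring

lemma notMem_range_algebraMap_of_disc_ne_zero (σ : F ≃ₐ[ℚ] F) {T N : ℚ}
    (hT : θ + σ θ = algebraMap ℚ F T) (hN : θ * σ θ = algebraMap ℚ F N)
    (hΔ : T ^ 2 - 4 * N ≠ 0) : θ ∉ Set.range (algebraMap ℚ F) := by
  rintro ⟨c, rfl⟩
  apply hΔ
  apply (algebraMap ℚ F).injective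
  rw [← sq_sub_eq_algebraMap_disc σ hT hN, AlgEquiv.commutes, sub_self]
  simp

lemma eq_of_add_mul_eq (hθ : θ ∉ Set.range (algebraMap ℚ F)) {a b a' b' : ℚ}
    (h : algebraMap ℚ F a + algebraMap ℚ F b * θ = algebraMap ℚ F a' + algebraMap ℚ F b' * θ) :
    a = a' ∧ b = b' := by
  by_cases hb : b = b'
  · subst hb
    exact ⟨(algebraMap ℚ F).injective (add_right_cancel h), rfl⟩
  · refine absurd ⟨(a' - a) / (b - b'), ?_⟩ hθ
    rw [map_div₀, div_eq_iff ((map_ne_zero _).2 (sub_ne_zero.2 hb))]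
    simp only [map_sub]
    linear_combination -h

lemma exists_intCast_eq_of_isIntegral {c : ℚ} (h : IsIntegral ℤ (algebraMap ℚ F c)) :
    ∃ m : ℤ, c = m := by
  obtain ⟨m, hm⟩ := IsIntegrallyClosed.isIntegral_iff.mp
    ((isIntegral_algebraMap_iff (algebraMap ℚ F).injective).mp h)
  exact ⟨m, by simpa using hm.symm⟩

end QuadraticAlgebra

section Embedding

variable {F : Type*} [Field F] [Algebra ℚ F] {θ : F} {T N : ℚ}
  {Ψ : F →ₐ[ℚ] Matrix (Fin 2) (Fin 2) ℚ}

lemma algHom_add_mul_eq_quadMat (hΨ : Ψ θ = !![T, -N; 1, 0]) (u v : ℚ) :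
    Ψ (algebraMap ℚ F u + algebraMap ℚ F v * θ) = quadMat T N u v := by
  rw [map_add, map_mul, AlgHom.commutes, AlgHom.commutes, hΨ]
  ext i j
  fin_cases i <;> fin_cases j <;> simp [quadMat, Matrix.algebraMap_matrix_apply, Matrix.mul_apply]

lemma exists_eq_add_mul_of_algHom (hΨ : Ψ θ = !![T, -N; 1, 0]) (x : F) :
    ∃ u v : ℚ, x = algebraMap ℚ F u + algebraMap ℚ F v * θ := by
  have hcomm : Commute (Ψ x) !![T, -N; 1, 0] := hΨ ▸ (Commute.all x θ).map Ψ
  refine ⟨Ψ x 1 1, Ψ x 1 0, Ψ.toRingHom.injective ?_⟩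
  change Ψ x = Ψ _
  rw [algHom_add_mul_eq_quadMat hΨ]
  exact eq_quadMat_of_commute hcomm

end Embedding

section PadicApproximation

variable {q : ℕ} [hq : Fact q.Prime]

lemma exists_intCast_norm_sub_lt {r : ℚ_[q]} (hr : ‖r‖ ≤ 1) {ε : ℝ} (hε : 0 < ε) :
    ∃ s : ℤ, ‖(s : ℚ_[q]) - r‖ < ε := by
  obtain ⟨R, rfl⟩ : ∃ R : ℤ_[q], (R : ℚ_[q]) = r := ⟨⟨r, hr⟩, rfl⟩
  obtain ⟨s, hs⟩ := PadicInt.denseRange_intCast.exists_dist_lt R hε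
  refine ⟨s, ?_⟩
  rwa [dist_comm, dist_eq_norm, PadicInt.norm_def, PadicInt.coe_sub, PadicInt.coe_intCast] at hs

lemma dvd_and_pow_four_dvd_sq_sub {r : ℚ_[q]} {Δ s : ℤ} (hr : ‖r‖ < 1) (hΔ : r ^ 2 = Δ)
    (hs : ‖(s : ℚ_[q]) - r‖ ≤ (q : ℝ) ^ (-4 : ℤ)) : (q : ℤ) ∣ s ∧ (q : ℤ) ^ 4 ∣ s ^ 2 - Δ := by
  have hq4 : (q : ℝ) ^ (-4 : ℤ) < 1 :=
    zpow_lt_one_of_neg₀ (by exact_mod_cast hq.out.one_lt) (by norm_num)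
  have hsr : ‖(s : ℚ_[q]) - r‖ < 1 := hs.trans_lt hq4
  have hs1 : ‖(s : ℚ_[q])‖ < 1 := by
    simpa using (IsUltrametricDist.norm_add_le_max ((s : ℚ_[q]) - r) r).trans_lt (max_lt hsr hr)
  refine ⟨Padic.norm_intCast_lt_one_iff.mp hs1, (Padic.norm_int_le_pow_iff_dvd _ 4).mp ?_⟩
  have hfactor : ((s ^ 2 - Δ : ℤ) : ℚ_[q]) = ((s : ℚ_[q]) - r) * ((s : ℚ_[q]) + r) := by
    push_cast
    linear_combination hΔ
  rw [hfactor, norm_mul]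
  have hsr' : ‖(s : ℚ_[q]) + r‖ ≤ 1 :=
    (IsUltrametricDist.norm_add_le_max _ _).trans (max_le hs1.le hr.le)
  simpa using mul_le_mul hs hsr' (norm_nonneg _) (by positivity)

lemma exists_int_approx_sqrt_disc {t n : ℤ} {r : ℚ_[q]} (hr : ‖r‖ < 1)
    (hΔ : r ^ 2 = ((t ^ 2 - 4 * n : ℤ) : ℚ_[q])) :
    ∃ s : ℤ, (q : ℤ) ∣ s ∧ 2 ∣ s - t ∧ 4 * (q : ℤ) ^ 2 ∣ s ^ 2 - (t ^ 2 - 4 * n) := by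
  obtain ⟨s₀, hs₀⟩ := exists_intCast_norm_sub_lt hr.le
    (zpow_pos (by exact_mod_cast hq.out.pos : (0 : ℝ) < q) (-4))
  rcases eq_or_ne q 2 with rfl | hq2
  -- for `q = 2` the parity of `s₀` is forced; for odd `q`, adding `q⁴` corrects it
  · obtain ⟨hs₀2, h16⟩ := dvd_and_pow_four_dvd_sq_sub hr hΔ hs₀.le
    have ht : (2 : ℤ) ∣ t := by
      refine Int.prime_two.dvd_of_dvd_pow (n := 2) ?_
      have : t ^ 2 = s₀ ^ 2 - (s₀ ^ 2 - (t ^ 2 - 4 * n)) + 4 * n := by ring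
      rw [this]
      exact ((dvd_pow hs₀2 two_ne_zero).sub (dvd_trans ⟨8, by norm_num⟩ h16)).add ⟨2 * n, by ring⟩
    exact ⟨s₀, hs₀2, by push_cast at hs₀2 ⊢; omega, by norm_num at h16 ⊢; exact h16⟩
  · obtain ⟨k, hk⟩ : Odd ((q : ℤ) ^ 4) := (Int.odd_coe_nat q |>.mpr (hq.out.odd_of_ne_two hq2)).pow
    obtain ⟨s, hs, a, ha⟩ : ∃ s : ℤ, ‖(s : ℚ_[q]) - r‖ ≤ (q : ℝ) ^ (-4 : ℤ) ∧ 2 ∣ s - t := by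
      by_cases h : 2 ∣ s₀ - t
      · exact ⟨s₀, hs₀.le, h⟩
      · refine ⟨s₀ + q ^ 4, ?_, by omega⟩
        rw [Int.cast_add, add_sub_right_comm]
        refine (IsUltrametricDist.norm_add_le_max _ _).trans (max_le hs₀.le ?_)
        push_cast
        rw [Padic.norm_p_pow]
        rfl
    obtain ⟨hqs, hq4⟩ := dvd_and_pow_four_dvd_sq_sub hr hΔ hs
    have h4 : 4 ∣ s ^ 2 - (t ^ 2 - 4 * n) :=
      ⟨a * t + a ^ 2 + n, by linear_combination (s + t + 2 * a) * ha⟩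
    have hcop : IsCoprime (4 : ℤ) ((q : ℤ) ^ 2) := by
      have := (Nat.isCoprime_iff_coprime.mpr
        (Nat.coprime_two_left.mpr (hq.out.odd_of_ne_two hq2))).pow (m := 2) (n := 2)
      simpa using this
    exact ⟨s, hqs, ⟨a, ha⟩, hcop.mul_dvd h4 (dvd_trans (pow_dvd_pow _ (by norm_num)) hq4)⟩

end PadicApproximation

lemma norm_eq_one_of_sq_eq_disc {F : Type*} [Field F] [Algebra ℚ F] {θ : F}
    (hθ : θ ∉ Set.range (algebraMap ℚ F)) {t n : ℤ} (hquad : θ ^ 2 - t * θ + n = 0)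
    (hOF : ∀ y : F, IsIntegral ℤ y → ∃ a b : ℤ, y = a + b * θ)
    {q : ℕ} [hq : Fact q.Prime] {r : ℚ_[q]} (hr : r ^ 2 = ((t ^ 2 - 4 * n : ℤ) : ℚ_[q])) :
    ‖r‖ = 1 := by
  have : CharZero F := charZero_of_injective_algebraMap (algebraMap ℚ F).injective
  have hle : ‖r‖ ≤ 1 := by
    refine (pow_le_one_iff_of_nonneg (norm_nonneg r) two_ne_zero).mp ?_
    rw [← norm_pow, hr]
    exact Padic.norm_int_le_one _
  refine hle.antisymm (not_lt.mp fun hlt => ?_)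
  obtain ⟨s, ⟨e, rfl⟩, ⟨a, ha⟩, ⟨f, hf⟩⟩ := exists_int_approx_sqrt_disc hlt hr
  -- `a + θ` has trace `s = qe` and norm `(s² - Δ)/4 = q²f`
  have hq0 : (q : F) ≠ 0 := Nat.cast_ne_zero.mpr hq.out.ne_zero
  have hy : ((a + θ) / q) ^ 2 - e * ((a + θ) / q) + f =
      ((a + θ) ^ 2 - q * e * (a + θ) + f * q ^ 2) / q ^ 2 := by
    field_simp
  have hyint : IsIntegral ℤ ((a + θ) / q : F) := by
    refine isIntegral_of_sq_sub_mul_add_eq_zero e f ?_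
    have ha' : (q * e - t : F) = 2 * a := by exact_mod_cast congrArg (Int.cast : ℤ → F) ha
    have hf' : ((q * e) ^ 2 - (t ^ 2 - 4 * n) : F) = 4 * q ^ 2 * f := by
      exact_mod_cast congrArg (Int.cast : ℤ → F) hf
    rw [hy, div_eq_zero_iff]
    left
    linear_combination hquad + ((q * e - 2 * a + t) / 4 - θ) * ha' - hf' / 4
  obtain ⟨a', b', hab⟩ := hOF _ hyint
  have hlin : algebraMap ℚ F a + algebraMap ℚ F 1 * θ =
      algebraMap ℚ F (q * a') + algebraMap ℚ F (q * b') * θ := by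
    simp only [map_one, map_mul, map_natCast, map_intCast, one_mul]
    rw [div_eq_iff hq0] at hab
    linear_combination hab
  have hqb : (q : ℤ) * b' = 1 := by exact_mod_cast (eq_of_add_mul_eq hθ hlin).2.symm
  exact hq.out.one_lt.ne' (by exact_mod_cast Int.eq_one_of_mul_eq_one_right (by positivity) hqb)

lemma Matrix.inv_mul_mul_eq_of_mul_eq {n K : Type*} [Fintype n] [DecidableEq n] [CommRing K]
    {S A D : Matrix n n K} (hS : IsUnit S.det) (h : A * S = S * D) : S⁻¹ * A * S = D := by
  rw [Matrix.mul_assoc, h, ← Matrix.mul_assoc, Matrix.nonsing_inv_mul _ hS, Matrix.one_mul]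

section LocalConjugation

variable {q : ℕ} [Fact q.Prime] {T N : ℚ} {r u v : ℚ_[q]}

lemma splitMat_det (T : ℚ) (r : ℚ_[q]) : (splitMat T r).det = r := by
  simp only [splitMat, Matrix.det_fin_two_of]
  ring

lemma quadMat_mul_splitMat (hr : r ^ 2 = (T : ℚ_[q]) ^ 2 - 4 * N) :
    quadMat (T : ℚ_[q]) N u v * splitMat T r =
      splitMat T r * !![u + v * ((T + r) / 2), 0; 0, u + v * ((T - r) / 2)] := by
  have hN : (N : ℚ_[q]) = ((T : ℚ_[q]) ^ 2 - r ^ 2) / 4 := by linear_combination hr / 4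
  ext i j
  fin_cases i <;> fin_cases j <;> simp [quadMat, splitMat, Matrix.mul_apply, hN] <;> ring

lemma diagonal_mul_cMat {C : ℕ} (hC : (C : ℚ_[q]) ≠ 0) (α β : ℚ_[q]) :
    !![α, 0; 0, β] * cMat q C = cMat q C * !![α, (β - α) / C; 0, β] := by
  ext i j
  fin_cases i <;> fin_cases j <;> simp [cMat, Matrix.mul_apply, mul_div_cancel₀ _ hC] <;> ring

lemma conj_splitMat (hr0 : r ≠ 0) (hr : r ^ 2 = (T : ℚ_[q]) ^ 2 - 4 * N) :
    (splitMat T r)⁻¹ * quadMat (T : ℚ_[q]) N u v * splitMat T r =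
      !![u + v * ((T + r) / 2), 0; 0, u + v * ((T - r) / 2)] :=
  Matrix.inv_mul_mul_eq_of_mul_eq (by simpa [splitMat_det] using hr0) (quadMat_mul_splitMat hr)

lemma conj_splitMat_mul_cMat {C : ℕ} (hC : (C : ℚ_[q]) ≠ 0) (hr0 : r ≠ 0)
    (hr : r ^ 2 = (T : ℚ_[q]) ^ 2 - 4 * N) :
    (splitMat T r * cMat q C)⁻¹ * quadMat (T : ℚ_[q]) N u v * (splitMat T r * cMat q C) =
      !![u + v * ((T + r) / 2), -(v * r) / C; 0, u + v * ((T - r) / 2)] := by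
  refine Matrix.inv_mul_mul_eq_of_mul_eq (by
    simpa [Matrix.det_mul, splitMat_det, cMat, Matrix.det_fin_two_of] using
      ⟨hr0, Nat.cast_ne_zero.mp hC⟩) ?_
  rw [← Matrix.mul_assoc, quadMat_mul_splitMat hr, Matrix.mul_assoc, diagonal_mul_cMat hC,
    Matrix.mul_assoc, show u + v * ((T - r) / 2) - (u + v * ((T + r) / 2)) = -(v * r) by ring]

end LocalConjugation

section LocalIntegrality

variable {q : ℕ} [Fact q.Prime] {T N : ℚ} {r u v : ℚ_[q]}

lemma isIntegralMat_fin_two_iff {a b c d : ℚ_[q]} :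
    isIntegralMat !![a, b; c, d] ↔ ‖a‖ ≤ 1 ∧ ‖b‖ ≤ 1 ∧ ‖c‖ ≤ 1 ∧ ‖d‖ ≤ 1 := by
  simp [isIntegralMat, Fin.forall_fin_two, and_assoc]

lemma isIntegralMat_quadMat_iff (hT : ‖(T : ℚ_[q])‖ ≤ 1) (hN : ‖(N : ℚ_[q])‖ ≤ 1) :
    isIntegralMat (quadMat (T : ℚ_[q]) N u v) ↔ ‖u‖ ≤ 1 ∧ ‖v‖ ≤ 1 := by
  rw [quadMat, isIntegralMat_fin_two_iff]
  constructor
  · rintro ⟨-, -, hv, hu⟩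
    exact ⟨hu, hv⟩
  · rintro ⟨hu, hv⟩
    refine ⟨norm_add_mul_le_one hu hv hT, ?_, hv, hu⟩
    rw [norm_neg, norm_mul]
    exact mul_le_one₀ hv (norm_nonneg _) hN

lemma norm_half_add_le_one (hT : ‖(T : ℚ_[q])‖ ≤ 1) (hN : ‖(N : ℚ_[q])‖ ≤ 1)
    (hr : r ^ 2 = (T : ℚ_[q]) ^ 2 - 4 * N) : ‖(T + r) / 2‖ ≤ 1 :=
  norm_le_one_of_sq_eq hT hN (by linear_combination hr / 4)

lemma norm_half_sub_le_one (hT : ‖(T : ℚ_[q])‖ ≤ 1) (hN : ‖(N : ℚ_[q])‖ ≤ 1)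
    (hr : r ^ 2 = (T : ℚ_[q]) ^ 2 - 4 * N) : ‖(T - r) / 2‖ ≤ 1 :=
  norm_le_one_of_sq_eq hT hN (by linear_combination hr / 4)

lemma norm_eigenvalues_le_one_iff (hT : ‖(T : ℚ_[q])‖ ≤ 1) (hN : ‖(N : ℚ_[q])‖ ≤ 1)
    (hr : r ^ 2 = (T : ℚ_[q]) ^ 2 - 4 * N) (hr1 : ‖r‖ = 1) :
    ‖u + v * ((T + r) / 2)‖ ≤ 1 ∧ ‖u + v * ((T - r) / 2)‖ ≤ 1 ↔ ‖u‖ ≤ 1 ∧ ‖v‖ ≤ 1 := by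
  have hθ := norm_half_add_le_one hT hN hr
  constructor
  · rintro ⟨hα, hβ⟩
    have hv : ‖v‖ ≤ 1 := by
      have hvr : v * r = (u + v * ((T + r) / 2)) - (u + v * ((T - r) / 2)) := by ring
      have := (IsUltrametricDist.norm_sub_le_max _ _).trans (max_le hα hβ)
      rwa [← hvr, norm_mul, hr1, mul_one] at this
    refine ⟨?_, hv⟩
    rw [show u = (u + v * ((T + r) / 2)) + -v * ((T + r) / 2) by ring]
    exact norm_add_mul_le_one hα (by rwa [norm_neg]) hθ
  · rintro ⟨hu, hv⟩
    exact ⟨norm_add_mul_le_one hu hv hθ, norm_add_mul_le_one hu hv (norm_half_sub_le_one hT hN hr)⟩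

lemma isIntegralMat_conj_splitMat_iff (hT : ‖(T : ℚ_[q])‖ ≤ 1) (hN : ‖(N : ℚ_[q])‖ ≤ 1)
    (hr : r ^ 2 = (T : ℚ_[q]) ^ 2 - 4 * N) (hr1 : ‖r‖ = 1) :
    isIntegralMat ((splitMat T r)⁻¹ * quadMat (T : ℚ_[q]) N u v * splitMat T r) ↔
      ‖u‖ ≤ 1 ∧ ‖v‖ ≤ 1 := by
  rw [conj_splitMat (norm_ne_zero_iff.mp (by simp [hr1])) hr, isIntegralMat_fin_two_iff]
  simp only [norm_zero, zero_le_one, true_and]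
  exact norm_eigenvalues_le_one_iff hT hN hr hr1

lemma isIntegralMat_conj_splitMat_mul_cMat_iff {C : ℕ} (hC : (C : ℚ_[q]) ≠ 0)
    (hT : ‖(T : ℚ_[q])‖ ≤ 1) (hN : ‖(N : ℚ_[q])‖ ≤ 1)
    (hr : r ^ 2 = (T : ℚ_[q]) ^ 2 - 4 * N) (hr1 : ‖r‖ = 1) :
    isIntegralMat ((splitMat T r * cMat q C)⁻¹ * quadMat (T : ℚ_[q]) N u v *
      (splitMat T r * cMat q C)) ↔ ‖u‖ ≤ 1 ∧ ‖v / C‖ ≤ 1 := by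
  have hoff : ‖-(v * r) / C‖ = ‖v / C‖ := by
    rw [norm_div, norm_neg, norm_mul, hr1, mul_one, norm_div]
  rw [conj_splitMat_mul_cMat hC (norm_ne_zero_iff.mp (by simp [hr1])) hr,
    isIntegralMat_fin_two_iff, hoff]
  constructor
  · rintro ⟨hα, hvC, -, hβ⟩
    exact ⟨((norm_eigenvalues_le_one_iff hT hN hr hr1).mp ⟨hα, hβ⟩).1, hvC⟩
  · rintro ⟨hu, hvC⟩
    have hv : ‖v‖ ≤ 1 := by
      rw [← div_mul_cancel₀ v hC, norm_mul]
      exact mul_le_one₀ hvC (norm_nonneg _) (by simpa using Padic.norm_int_le_one (C : ℤ))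
    obtain ⟨hα, hβ⟩ := (norm_eigenvalues_le_one_iff hT hN hr hr1).mpr ⟨hu, hv⟩
    exact ⟨hα, hvC, by simp, hβ⟩

end LocalIntegrality

lemma exists_intCast_eq_iff_forall_norm_le_one (u : ℚ) :
    (∃ a : ℤ, u = a) ↔ ∀ (q : ℕ) (_ : Fact q.Prime), ‖(u : ℚ_[q])‖ ≤ 1 := by
  constructor
  · rintro ⟨a, rfl⟩ q _
    simpa using Padic.norm_int_le_one a
  · intro h
    have hden : u.den = 1 := Nat.eq_one_iff_not_exists_prime_dvd.mpr fun p hp => by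
      have : Fact p.Prime := ⟨hp⟩
      exact Rat.padicValuation_le_one_iff.mp
        ((Padic.norm_rat_le_one_iff_padicValuation_le_one p).mp (h p this))
    exact ⟨u.num, ((Rat.den_eq_one_iff u).mp hden).symm⟩

lemma exists_int_eq_add_mul_iff {F : Type*} [Field F] [Algebra ℚ F] {θ : F}
    (hθ : θ ∉ Set.range (algebraMap ℚ F)) {C : ℕ} (hC : C ≠ 0) (u v : ℚ) :
    (∃ a b : ℤ, algebraMap ℚ F u + algebraMap ℚ F v * θ = (a : F) + (C : F) * (b : F) * θ) ↔
      (∃ a : ℤ, u = a) ∧ ∃ b : ℤ, v / C = b := by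
  have hCq : (C : ℚ) ≠ 0 := Nat.cast_ne_zero.mpr hC
  have hcast (a b : ℤ) : (a : F) + (C : F) * (b : F) * θ =
      algebraMap ℚ F a + algebraMap ℚ F (C * b) * θ := by
    simp only [map_intCast, map_mul, map_natCast]
  constructor
  · rintro ⟨a, b, h⟩
    obtain ⟨rfl, rfl⟩ := eq_of_add_mul_eq hθ (h.trans (hcast a b))
    exact ⟨⟨a, rfl⟩, b, by field_simp⟩
  · rintro ⟨⟨a, rfl⟩, b, hb⟩
    refine ⟨a, b, ?_⟩
    rw [hcast, ← hb, mul_div_cancel₀ _ hCq]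

lemma local_conditions_iff {q : ℕ} [Fact q.Prime] {C : ℕ} (hC : C ≠ 0) {T N : ℚ}
    (hT : ‖(T : ℚ_[q])‖ ≤ 1) (hN : ‖(N : ℚ_[q])‖ ≤ 1)
    (hunit : ∀ r : ℚ_[q], r ^ 2 = ((T ^ 2 - 4 * N : ℚ) : ℚ_[q]) → ‖r‖ = 1)
    (ρ : q ∣ C → ℚ_[q]) (hρ : ∀ h, ρ h ^ 2 = ((T ^ 2 - 4 * N : ℚ) : ℚ_[q]))
    {A : Matrix (Fin 2) (Fin 2) ℚ} {u v : ℚ} (hA : A = quadMat T N u v) :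
    ((∀ hqC : q ∣ C,
        isIntegralMat ((splitMat T (ρ hqC) * cMat q C)⁻¹ * A.map (fun t : ℚ => (t : ℚ_[q]))
          * (splitMat T (ρ hqC) * cMat q C))) ∧
      (¬ q ∣ C →
        (∀ r : ℚ_[q], r ^ 2 = ((T ^ 2 - 4 * N : ℚ) : ℚ_[q]) →
          isIntegralMat ((splitMat T r)⁻¹ * A.map (fun t : ℚ => (t : ℚ_[q])) * splitMat T r)) ∧
        ((¬ ∃ r : ℚ_[q], r ^ 2 = ((T ^ 2 - 4 * N : ℚ) : ℚ_[q])) →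
          isIntegralMat (A.map (fun t : ℚ => (t : ℚ_[q])))))) ↔
      ‖(u : ℚ_[q])‖ ≤ 1 ∧ ‖((v / C : ℚ) : ℚ_[q])‖ ≤ 1 := by
  have hmap : A.map (fun t : ℚ => (t : ℚ_[q])) = quadMat (T : ℚ_[q]) N u v :=
    hA ▸ quadMat_map (Rat.castHom ℚ_[q]) T N u v
  have hdisc : ((T ^ 2 - 4 * N : ℚ) : ℚ_[q]) = (T : ℚ_[q]) ^ 2 - 4 * N := by push_cast; ring
  rw [hdisc] at hunit hρ
  simp only [hmap, hdisc, Rat.cast_div, Rat.cast_natCast]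
  have hCq : (C : ℚ_[q]) ≠ 0 := Nat.cast_ne_zero.mpr hC
  by_cases hqC : q ∣ C
  · have hiff := isIntegralMat_conj_splitMat_mul_cMat_iff (u := u) (v := v) hCq hT hN (hρ hqC)
      (hunit _ (hρ hqC))
    exact ⟨fun h => hiff.mp (h.1 hqC), fun h => ⟨fun _ => hiff.mpr h, absurd hqC⟩⟩
  · have hC1 : ‖(C : ℚ_[q])‖ = 1 :=
      Padic.norm_natCast_eq_one_iff.mpr ((Nat.Prime.coprime_iff_not_dvd Fact.out).mpr hqC)
    rw [norm_div, hC1, div_one]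
    by_cases hex : ∃ r : ℚ_[q], r ^ 2 = (T : ℚ_[q]) ^ 2 - 4 * N
    · obtain ⟨r, hr⟩ := hex
      have hiff (r : ℚ_[q]) (hr : r ^ 2 = (T : ℚ_[q]) ^ 2 - 4 * N) :=
        isIntegralMat_conj_splitMat_iff (u := u) (v := v) hT hN hr (hunit r hr)
      exact ⟨fun h => (hiff r hr).mp ((h.2 hqC).1 r hr), fun h => ⟨fun h' => absurd h' hqC,
        fun _ => ⟨fun r' hr' => (hiff r' hr').mpr h, fun hne => absurd ⟨r, hr⟩ hne⟩⟩⟩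
    · refine ⟨fun h => (isIntegralMat_quadMat_iff hT hN).mp ((h.2 hqC).2 hex),
        fun h => ⟨fun h' => absurd h' hqC, fun _ => ⟨fun r hr => absurd ⟨r, hr⟩ hex,
          fun _ => (isIntegralMat_quadMat_iff hT hN).mpr h⟩⟩⟩

theorem stmt_14_general
    (F : Type*) [Field F] [Algebra ℚ F]
    (σ : F ≃ₐ[ℚ] F)
    (θ : F) (T N : ℚ)
    (hT : θ + σ θ = algebraMap ℚ F T)
    (hN : θ * σ θ = algebraMap ℚ F N)
    (hΔ : T ^ 2 - 4 * N ≠ 0)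
    (hOF : ∀ y : F, IsIntegral ℤ y ↔ ∃ a b : ℤ, y = (a : F) + (b : F) * θ)
    (C N' : ℕ) (hC : 0 < C)
    (Ψ : F →ₐ[ℚ] Matrix (Fin 2) (Fin 2) ℚ)
    (hΨ : Ψ θ = !![T, -N; 1, 0])
    -- a chosen square root of the discriminant at each prime dividing N'C
    -- (every prime factor of N'C is split in F)
    (root : ∀ (q : ℕ) (hq : Fact q.Prime), q ∣ N' * C → ℚ_[q])
    (hroot : ∀ (q : ℕ) (hq : Fact q.Prime) (h : q ∣ N' * C),
        (root q hq h) ^ 2 = ((T ^ 2 - 4 * N : ℚ) : ℚ_[q])) :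
    ∀ x : F,
      (∃ a b : ℤ, x = (a : F) + (C : F) * (b : F) * θ) ↔
      ∀ (q : ℕ) (hq : Fact q.Prime),
        (∀ hqC : q ∣ C,
          @isIntegralMat q hq
            ((@splitMat q hq T (root q hq (hqC.mul_left N')) * @cMat q hq C)⁻¹
              * (Ψ x).map (fun t : ℚ => (t : ℚ_[q]))
              * (@splitMat q hq T (root q hq (hqC.mul_left N')) * @cMat q hq C))) ∧
        (¬ q ∣ C →
          (∀ r : ℚ_[q], r ^ 2 = ((T ^ 2 - 4 * N : ℚ) : ℚ_[q]) →
            @isIntegralMat q hq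
              ((@splitMat q hq T r)⁻¹
                * (Ψ x).map (fun t : ℚ => (t : ℚ_[q]))
                * @splitMat q hq T r)) ∧
          ((¬ ∃ r : ℚ_[q], r ^ 2 = ((T ^ 2 - 4 * N : ℚ) : ℚ_[q])) →
            @isIntegralMat q hq ((Ψ x).map (fun t : ℚ => (t : ℚ_[q]))))) := by
  have hθ := notMem_range_algebraMap_of_disc_ne_zero σ hT hN hΔ
  have hθint : IsIntegral ℤ θ := (hOF θ).mpr ⟨0, 1, by simp⟩
  have hσθint : IsIntegral ℤ (σ θ) := hθint.map (σ.toAlgHom.restrictScalars ℤ)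
  obtain ⟨t, rfl⟩ := exists_intCast_eq_of_isIntegral (hT ▸ hθint.add hσθint)
  obtain ⟨n, rfl⟩ := exists_intCast_eq_of_isIntegral (hN ▸ hθint.mul hσθint)
  have hquad : θ ^ 2 - t * θ + n = 0 := by
    rw [← map_intCast (algebraMap ℚ F), ← map_intCast (algebraMap ℚ F) n, ← hT, ← hN]
    ring
  intro x
  obtain ⟨u, v, rfl⟩ := exists_eq_add_mul_of_algHom hΨ x
  rw [exists_int_eq_add_mul_iff hθ hC.ne']
  simp only [exists_intCast_eq_iff_forall_norm_le_one, ← forall_and]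
  refine forall₂_congr fun q _ => (local_conditions_iff hC.ne' ?_ ?_ (fun r hr => ?_) _
    (fun h => hroot q _ _) (algHom_add_mul_eq_quadMat hΨ u v)).symm
  · simpa using Padic.norm_int_le_one t
  · simpa using Padic.norm_int_le_one n
  · exact norm_eq_one_of_sq_eq_disc hθ hquad (fun y => (hOF y).mp) (by rw [hr]; push_cast; ring)

/-- Optimality of the embedding `Ψ`. For a real quadratic field
`F = ℚ(θ)` with `O_F = ℤ + ℤθ`, coprime `C, N` with all prime factors of `NC` split in
`F`, and the adelic element `ς^{(C)}` built from `ς_q = δ⁻¹[[θ̄,θ],[1,1]]` at split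
primes and `[[C,-1],[0,1]]` at primes dividing `C`, the embedding
`Ψ : F → M₂(ℚ)`, `Ψ(θ) = [[Tr θ, -N θ],[1,0]]`, satisfies
`Ψ⁻¹(R_N) ∩ F = O_C = ℤ + C·O_F`, where
`R_N = M₂(ℚ) ∩ ς^{(C)} M₂(Ẑ) (ς^{(C)})⁻¹`; equivalently, `x ∈ O_C` iff at every
prime the (ς-conjugated) image of `Ψ(x)` is integral. -/
theorem stmt_14
    (F : Type*) [Field F] [Algebra ℚ F]
    (σ : F ≃ₐ[ℚ] F) (hσ : σ ≠ AlgEquiv.refl)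
    (θ : F) (T N : ℚ)
    (hT : θ + σ θ = algebraMap ℚ F T)
    (hN : θ * σ θ = algebraMap ℚ F N)
    (hΔ : T ^ 2 - 4 * N ≠ 0)
    (hOF : ∀ y : F, IsIntegral ℤ y ↔ ∃ a b : ℤ, y = (a : F) + (b : F) * θ)
    (C N' : ℕ) (hC : 0 < C) (hN' : 0 < N') (hcop : Nat.Coprime C N')
    (Ψ : F →ₐ[ℚ] Matrix (Fin 2) (Fin 2) ℚ)
    (hΨ : Ψ θ = !![T, -N; 1, 0])
    -- a chosen square root of the discriminant at each prime dividing N'C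
    -- (every prime factor of N'C is split in F)
    (root : ∀ (q : ℕ) (hq : Fact q.Prime), q ∣ N' * C → ℚ_[q])
    (hroot : ∀ (q : ℕ) (hq : Fact q.Prime) (h : q ∣ N' * C),
        (root q hq h) ^ 2 = ((T ^ 2 - 4 * N : ℚ) : ℚ_[q])) :
    ∀ x : F,
      (∃ a b : ℤ, x = (a : F) + (C : F) * (b : F) * θ) ↔
      ∀ (q : ℕ) (hq : Fact q.Prime),
        (∀ hqC : q ∣ C,
          @isIntegralMat q hq
            ((@splitMat q hq T (root q hq (hqC.mul_left N')) * @cMat q hq C)⁻¹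
              * (Ψ x).map (fun t : ℚ => (t : ℚ_[q]))
              * (@splitMat q hq T (root q hq (hqC.mul_left N')) * @cMat q hq C))) ∧
        (¬ q ∣ C →
          (∀ r : ℚ_[q], r ^ 2 = ((T ^ 2 - 4 * N : ℚ) : ℚ_[q]) →
            @isIntegralMat q hq
              ((@splitMat q hq T r)⁻¹
                * (Ψ x).map (fun t : ℚ => (t : ℚ_[q]))
                * @splitMat q hq T r)) ∧
          ((¬ ∃ r : ℚ_[q], r ^ 2 = ((T ^ 2 - 4 * N : ℚ) : ℚ_[q])) →
            @isIntegralMat q hq ((Ψ x).map (fun t : ℚ => (t : ℚ_[q]))))) :=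
  stmt_14_general F σ θ T N hT hN hΔ hOF C N' hC Ψ hΨ root hroot

end
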